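/- arXiv:2305.19025 — 4 statements merged into one kernel-verified Lean document; each statement's English description precedes it below -/
import Mathlib

section
/- The monic right and left orthogonal polynomials satisfy the Szegő (Verblunsky) recursions Φ_{n+1}^R(z) = z Φ_n^R(z) + Φ_n^{L,*}(z) Φ_{n+1}^R(0) and Φ_{n+1}^L(z) = z Φ_n^L(z) + Φ_{n+1}^L(0) Φ_n^{R,*}(z). -/
noncomputable section

open ContinuousLinearMap

variable {H : Type*} [NormedAddCommGroup H] [InnerProductSpace ℂ H] [CompleteSpace H]

/-- A nontrivial positive operator-valued measure `μ` on the unit circle `𝕋`, recorded through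
its moments `mom j = (1/2π) ∫ e^{-ijθ} dμ(θ)` (so `mom (-j) = (mom j)†`) and the associated
right and left inner products `⟨⟨f, g⟩⟩_R = ∫ f(z)† dμ(z) g(z)` and
`⟨⟨f, g⟩⟩_L = ∫ g(z) dμ(z) f(z)†` on operator-valued functions on the circle, together with
their characteristic algebraic properties, positivity, and nontriviality
(`Trace ⟨⟨f, f⟩⟩_R > 0`, i.e. `⟨⟨f, f⟩⟩_R ≠ 0`, for every nonzero operator polynomial `f`). -/
structure OpMeasure (H : Type*) [NormedAddCommGroup H] [InnerProductSpace ℂ H]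
    [CompleteSpace H] where
  mom : ℤ → H →L[ℂ] H
  Rip : (ℂ → H →L[ℂ] H) → (ℂ → H →L[ℂ] H) → (H →L[ℂ] H)
  Lip : (ℂ → H →L[ℂ] H) → (ℂ → H →L[ℂ] H) → (H →L[ℂ] H)
  mom_neg : ∀ j : ℤ, mom (-j) = adjoint (mom j)
  Rip_mono : ∀ m k : ℕ,
    Rip (fun z => z ^ m • (1 : H →L[ℂ] H)) (fun z => z ^ k • (1 : H →L[ℂ] H)) =
      mom ((m : ℤ) - (k : ℤ))
  Lip_mono : ∀ m k : ℕ,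
    Lip (fun z => z ^ m • (1 : H →L[ℂ] H)) (fun z => z ^ k • (1 : H →L[ℂ] H)) =
      mom ((m : ℤ) - (k : ℤ))
  Rip_add_left : ∀ f g h, Rip (f + g) h = Rip f h + Rip g h
  Rip_add_right : ∀ f g h, Rip f (g + h) = Rip f g + Rip f h
  Lip_add_left : ∀ f g h, Lip (f + g) h = Lip f h + Lip g h
  Lip_add_right : ∀ f g h, Lip f (g + h) = Lip f g + Lip f h
  Rip_smul_left : ∀ (c : ℂ) (f g), Rip (fun z => c • f z) g = (starRingEnd ℂ) c • Rip f g
  Rip_smul_right : ∀ (c : ℂ) (f g), Rip f (fun z => c • g z) = c • Rip f g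
  Lip_smul_left : ∀ (c : ℂ) (f g), Lip (fun z => c • f z) g = (starRingEnd ℂ) c • Lip f g
  Lip_smul_right : ∀ (c : ℂ) (f g), Lip f (fun z => c • g z) = c • Lip f g
  Rip_op_left : ∀ (a : H →L[ℂ] H) (f g), Rip (fun z => f z * a) g = adjoint a * Rip f g
  Rip_op_right : ∀ (a : H →L[ℂ] H) (f g), Rip f (fun z => g z * a) = Rip f g * a
  Lip_op_left : ∀ (a : H →L[ℂ] H) (f g), Lip (fun z => a * f z) g = Lip f g * adjoint a
  Lip_op_right : ∀ (a : H →L[ℂ] H) (f g), Lip f (fun z => a * g z) = a * Lip f g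
  Rip_adjoint : ∀ f g, adjoint (Rip f g) = Rip g f
  Lip_adjoint : ∀ f g, adjoint (Lip f g) = Lip g f
  Rip_pos : ∀ f, (Rip f f).IsPositive
  Lip_pos : ∀ f, (Lip f f).IsPositive
  nontrivial_R : ∀ (n : ℕ) (f : ℂ → H →L[ℂ] H),
    (∃ a : Fin (n + 1) → H →L[ℂ] H, ∀ z, f z = ∑ k : Fin (n + 1), z ^ (k : ℕ) • a k) →
    f ≠ 0 → ∃ h : H, 0 < (@inner ℂ H _ (Rip f f h) h).re

/-- The right block Toeplitz matrix `T_n^R = [μ_{i-j}]_{i,j=0}^{n-1}` of the moments. -/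
def TmatR (mom : ℤ → H →L[ℂ] H) (n : ℕ) : Matrix (Fin n) (Fin n) (H →L[ℂ] H) :=
  fun i j => mom ((i : ℤ) - (j : ℤ))

/-- The left block Toeplitz matrix `T_n^L = [μ_{j-i}]_{i,j=0}^{n-1}` of the moments. -/
def TmatL (mom : ℤ → H →L[ℂ] H) (n : ℕ) : Matrix (Fin n) (Fin n) (H →L[ℂ] H) :=
  fun i j => mom ((j : ℤ) - (i : ℤ))

/-- The column `ν_n = (μ_{-n}, μ_{-n+1}, …, μ_{-1})ᵀ`. -/
def nuR (mom : ℤ → H →L[ℂ] H) (n : ℕ) : Fin n → H →L[ℂ] H :=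
  fun k => mom ((k : ℤ) - (n : ℤ))

/-- The column `ξ_n = (μ_n, μ_{n-1}, …, μ_1)ᵀ`. -/
def xiL (mom : ℤ → H →L[ℂ] H) (n : ℕ) : Fin n → H →L[ℂ] H :=
  fun k => mom ((n : ℤ) - (k : ℤ))

/-- Coefficients `(T_n^R)⁻¹ ν_n` of the monic right orthogonal polynomial. -/
def phiRcoef (mom : ℤ → H →L[ℂ] H) (n : ℕ) : Fin n → H →L[ℂ] H :=
  (Ring.inverse (TmatR mom n)).mulVec (nuR mom n)

/-- The monic right orthogonal polynomial
`Φ_n^R(z) = zⁿ I - [I, zI, …, z^{n-1}I] (T_n^R)⁻¹ ν_n`. -/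
def phiR (mom : ℤ → H →L[ℂ] H) (n : ℕ) : ℂ → H →L[ℂ] H :=
  fun z => z ^ n • (1 : H →L[ℂ] H) - ∑ k : Fin n, z ^ (k : ℕ) • phiRcoef mom n k

/-- Coefficients `[μ_{-n}, …, μ_{-1}] (T_n^L)⁻¹` of the monic left orthogonal polynomial. -/
def phiLcoef (mom : ℤ → H →L[ℂ] H) (n : ℕ) : Fin n → H →L[ℂ] H :=
  Matrix.vecMul (nuR mom n) (Ring.inverse (TmatL mom n))

/-- The monic left orthogonal polynomial
`Φ_n^L(z) = zⁿ I - [μ_{-n}, …, μ_{-1}] (T_n^L)⁻¹ (I, zI, …, z^{n-1}I)ᵀ`. -/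
def phiL (mom : ℤ → H →L[ℂ] H) (n : ℕ) : ℂ → H →L[ℂ] H :=
  fun z => z ^ n • (1 : H →L[ℂ] H) - ∑ k : Fin n, z ^ (k : ℕ) • phiLcoef mom n k

/-- The degree-`n` reversed polynomial `Φ_n^{R,*}(z) = zⁿ Φ_n^R(1/z̄)†`. -/
def phiRstar (mom : ℤ → H →L[ℂ] H) (n : ℕ) : ℂ → H →L[ℂ] H :=
  fun z => (1 : H →L[ℂ] H) - ∑ k : Fin n, z ^ (n - (k : ℕ)) • adjoint (phiRcoef mom n k)

/-- The degree-`n` reversed polynomial `Φ_n^{L,*}(z) = zⁿ Φ_n^L(1/z̄)†`. -/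
def phiLstar (mom : ℤ → H →L[ℂ] H) (n : ℕ) : ℂ → H →L[ℂ] H :=
  fun z => (1 : H →L[ℂ] H) - ∑ k : Fin n, z ^ (n - (k : ℕ)) • adjoint (phiLcoef mom n k)

/-- The Schur complement `κ_n^R = μ₀ - ν_n* (T_n^R)⁻¹ ν_n` of `μ₀` in `T_{n+1}^R`. -/
def kappaR (mom : ℤ → H →L[ℂ] H) (n : ℕ) : H →L[ℂ] H :=
  mom 0 - ∑ k : Fin n, adjoint (nuR mom n k) * phiRcoef mom n k

/-- The Schur complement `κ_n^L = μ₀ - ξ_n* (T_n^L)⁻¹ ξ_n` of `μ₀` in `T_{n+1}^L`. -/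
def kappaL (mom : ℤ → H →L[ℂ] H) (n : ℕ) : H →L[ℂ] H :=
  mom 0 - ∑ k : Fin n, adjoint (xiL mom n k) * ((Ring.inverse (TmatL mom n)).mulVec (xiL mom n) k)

/-- `IsSqrtSeq s κ` : for every `m`, `s m` is the (invertible) positive square root of `κ m`. -/
def IsSqrtSeq (s : ℕ → H →L[ℂ] H) (κ : ℕ → H →L[ℂ] H) : Prop :=
  ∀ m : ℕ, (s m).IsPositive ∧ s m * s m = κ m ∧ IsUnit (s m)

/-- The Verblunsky coefficient `α_n = α_n^R = -(κ_n^{-R/2})† Φ_{n+1}^R(0)† κ_n^{L/2}`,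
expressed through given positive square roots `sR m = κ_m^{R/2}`, `sL m = κ_m^{L/2}`. -/
def alphaV (mom : ℤ → H →L[ℂ] H) (sR sL : ℕ → H →L[ℂ] H) (j : ℕ) : H →L[ℂ] H :=
  -(adjoint (Ring.inverse (sR j)) * adjoint (phiR mom (j + 1) 0) * sL j)

/-- The operator on the Hilbert space `H ⊕ ⋯ ⊕ H` (`PiLp 2`) associated with a block
operator matrix. -/
def blockToOp {n : ℕ} (M : Matrix (Fin n) (Fin n) (H →L[ℂ] H)) :
    (PiLp 2 fun _ : Fin n => H) →L[ℂ] PiLp 2 fun _ : Fin n => H :=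
  ((PiLp.continuousLinearEquiv 2 ℂ fun _ : Fin n => H).symm.toContinuousLinearMap).comp
    ((ContinuousLinearMap.pi fun i =>
        ∑ j : Fin n, (M i j).comp (ContinuousLinearMap.proj j)).comp
      (PiLp.continuousLinearEquiv 2 ℂ fun _ : Fin n => H).toContinuousLinearMap)

/-- An operator `T` on a Hilbert space is *positive definite* if `⟨T x, x⟩ > 0` for every
`x ≠ 0` and `T` has a bounded inverse. -/
def IsPosDef {E : Type*} [NormedAddCommGroup E] [InnerProductSpace ℂ E]
    (T : E →L[ℂ] E) : Prop :=
  (∀ x : E, x ≠ 0 → 0 < (@inner ℂ E _ (T x) x).re) ∧ IsUnit T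

/-!
Rows `1, …, n` of the normal equations `T_{n+1}^R a = ν_{n+1}` for the coefficients `a` of
`Φ_{n+1}^R` form a system with matrix `T_n^R` for the shifted coefficients. Since Toeplitz
matrices are persymmetric, the coefficients of `Φ_n^R`, corrected by the reversed adjoint
coefficients of `Φ_n^L` times `a_0 = -Φ_{n+1}^R(0)`, solve the same system, so invertibility of
`T_n^R` gives the right recursion coefficientwise. Reflecting the moments, `j ↦ μ_{-j}`, exchanges
`T^R` and `T^L` and turns left coefficients into adjoints of right ones, so the left recursion is
the adjoint of the right recursion for the reflected measure.
-/

open ComplexConjugate Matrix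

-- Coefficient form of `P_{n+1}(z) = z P_n(z) + Q^*(z) P_{n+1}(0)` for monic `P_n`, `P_{n+1}`.
theorem sub_sum_succ_eq_smul_add_mul {R A : Type*} [CommRing R] [Ring A] [Algebra R A] {n : ℕ}
    (z : R) (a c : Fin n → A) (b : Fin (n + 1) → A)
    (hb : ∀ k : Fin n, b k.succ = a k - c k.rev * b 0) :
    z ^ (n + 1) • (1 : A) - ∑ k : Fin (n + 1), z ^ (k : ℕ) • b k =
      z • (z ^ n • (1 : A) - ∑ k : Fin n, z ^ (k : ℕ) • a k) +
        (1 - ∑ k : Fin n, z ^ (n - k : ℕ) • c k) * -b 0 := by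
  have hrev : ∑ k : Fin n, z ^ (n - k : ℕ) • c k = ∑ k : Fin n, z ^ ((k : ℕ) + 1) • c k.rev :=
    Fintype.sum_equiv Fin.revPerm _ _ fun k => by
      simp only [Fin.revPerm_apply, Fin.rev_rev, Fin.val_rev]
      congr 2; omega
  simp only [Fin.sum_univ_succ, hb, hrev, smul_sub, Finset.smul_sum, smul_smul, ← pow_succ',
    Fin.val_zero, Fin.val_succ, pow_zero, one_smul, sub_mul, one_mul, Finset.sum_mul,
    smul_mul_assoc, Finset.sum_sub_distrib, mul_neg]
  abel

section Toeplitz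

omit [CompleteSpace H]

variable {m : ℤ → H →L[ℂ] H} {n : ℕ}

/-- Moments of the reflected measure `z ↦ μ(z̄)`. -/
def momRefl (m : ℤ → H →L[ℂ] H) : ℤ → H →L[ℂ] H := fun j => m (-j)

theorem momRefl_momRefl (m : ℤ → H →L[ℂ] H) : momRefl (momRefl m) = m := by
  funext j; simp [momRefl]

theorem TmatR_momRefl (m : ℤ → H →L[ℂ] H) (n : ℕ) : TmatR (momRefl m) n = TmatL m n := by
  ext1 i j; simp [TmatR, TmatL, momRefl]

theorem TmatL_momRefl (m : ℤ → H →L[ℂ] H) (n : ℕ) : TmatL (momRefl m) n = TmatR m n := by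
  rw [← TmatR_momRefl, momRefl_momRefl]

theorem TmatR_mulVec_phiRcoef (h : IsUnit (TmatR m n)) : TmatR m n *ᵥ phiRcoef m n = nuR m n := by
  rw [phiRcoef, mulVec_mulVec, Ring.mul_inverse_cancel _ h, one_mulVec]

theorem phiLcoef_vecMul_TmatL (h : IsUnit (TmatL m n)) : phiLcoef m n ᵥ* TmatL m n = nuR m n := by
  rw [phiLcoef, vecMul_vecMul, Ring.inverse_mul_cancel _ h, vecMul_one]

theorem eq_phiRcoef_of_mulVec {v : Fin n → H →L[ℂ] H} (h : IsUnit (TmatR m n))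
    (hv : TmatR m n *ᵥ v = nuR m n) : v = phiRcoef m n :=
  mulVec_injective_of_isUnit h (hv.trans (TmatR_mulVec_phiRcoef h).symm)

theorem TmatR_mulVec_rev (v : Fin n → H →L[ℂ] H) (i : Fin n) :
    (TmatR m n *ᵥ fun k => v k.rev) i = (TmatL m n *ᵥ v) i.rev := by
  simp only [mulVec, dotProduct, TmatR, TmatL]
  refine Fintype.sum_equiv Fin.revPerm _ _ fun k => ?_
  simp only [Fin.revPerm_apply, Fin.val_rev]
  congr 2; omega

theorem TmatR_mulVec_tail (h : IsUnit (TmatR m (n + 1))) (i : Fin n) :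
    (TmatR m n *ᵥ fun k => phiRcoef m (n + 1) k.succ) i =
      m (i - n) - m (i + 1) * phiRcoef m (n + 1) 0 := by
  have hrow := congrFun (TmatR_mulVec_phiRcoef h) i.succ
  simp only [mulVec, dotProduct, TmatR, nuR, Fin.sum_univ_succ, Fin.val_succ, Fin.val_zero]
    at hrow ⊢
  push_cast at hrow
  simp only [add_sub_add_right_eq_sub, sub_zero] at hrow
  rw [← hrow]; abel

end Toeplitz

section Duality

variable {m : ℤ → H →L[ℂ] H} {n : ℕ}

theorem momRefl_neg (hm : ∀ j, m (-j) = adjoint (m j)) (j : ℤ) :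
    momRefl m (-j) = adjoint (momRefl m j) := by
  simp [momRefl, hm]

theorem conjTranspose_TmatL (hm : ∀ j, m (-j) = adjoint (m j)) :
    (TmatL m n)ᴴ = TmatR (momRefl m) n := by
  ext1 i j; simp [TmatL, TmatR, momRefl, star_eq_adjoint, ← hm]

theorem star_nuR (hm : ∀ j, m (-j) = adjoint (m j)) : star (nuR m n) = nuR (momRefl m) n := by
  ext1 k; simp [nuR, momRefl, star_eq_adjoint, ← hm]

theorem star_phiLcoef (hm : ∀ j, m (-j) = adjoint (m j)) (h : IsUnit (TmatL m n)) :
    star (phiLcoef m n) = phiRcoef (momRefl m) n := by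
  refine eq_phiRcoef_of_mulVec (by rwa [TmatR_momRefl]) ?_
  rw [← conjTranspose_TmatL hm, ← star_vecMul, phiLcoef_vecMul_TmatL h, star_nuR hm]

theorem star_phiRcoef (hm : ∀ j, m (-j) = adjoint (m j)) (h : IsUnit (TmatR m n)) :
    star (phiRcoef m n) = phiLcoef (momRefl m) n := by
  have := star_phiLcoef (momRefl_neg hm) (by rwa [TmatL_momRefl] : IsUnit (TmatL (momRefl m) n))
  rw [momRefl_momRefl] at this
  rw [← this, star_star]

end Duality

section Recursion

variable {m : ℤ → H →L[ℂ] H} {n : ℕ}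

theorem TmatR_mulVec_adjoint_phiLcoef_rev (hm : ∀ j, m (-j) = adjoint (m j))
    (h : IsUnit (TmatL m n)) (i : Fin n) :
    (TmatR m n *ᵥ fun k => adjoint (phiLcoef m n k.rev)) i = m (i + 1) := by
  have hγ : (fun k => adjoint (phiLcoef m n k)) = phiRcoef (momRefl m) n := by
    rw [← star_phiLcoef hm h]; funext k; simp [star_eq_adjoint]
  rw [TmatR_mulVec_rev (fun k => adjoint (phiLcoef m n k)), hγ, ← TmatR_momRefl,
    TmatR_mulVec_phiRcoef (by rwa [TmatR_momRefl]), nuR, momRefl, Fin.val_rev]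
  congr 1; omega

theorem phiRcoef_succ_succ (hm : ∀ j, m (-j) = adjoint (m j)) (hRn : IsUnit (TmatR m n))
    (hRn1 : IsUnit (TmatR m (n + 1))) (hLn : IsUnit (TmatL m n)) (k : Fin n) :
    phiRcoef m (n + 1) k.succ =
      phiRcoef m n k - adjoint (phiLcoef m n k.rev) * phiRcoef m (n + 1) 0 := by
  have hv : (fun k => phiRcoef m (n + 1) k.succ +
      adjoint (phiLcoef m n k.rev) * phiRcoef m (n + 1) 0) = phiRcoef m n := by
    refine eq_phiRcoef_of_mulVec hRn (funext fun i => ?_)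
    have htail := TmatR_mulVec_tail hRn1 i
    have hrev := congrArg (· * phiRcoef m (n + 1) 0) (TmatR_mulVec_adjoint_phiLcoef_rev hm hLn i)
    simp only [mulVec, dotProduct, mul_add, Finset.sum_add_distrib, Finset.sum_mul,
      mul_assoc] at htail hrev ⊢
    rw [htail, hrev, nuR, sub_add_cancel]
  rw [← hv, add_sub_cancel_right]

end Recursion

section Polynomials

variable {m : ℤ → H →L[ℂ] H} {n : ℕ}

omit [CompleteSpace H] in
theorem phiR_succ_zero (m : ℤ → H →L[ℂ] H) (n : ℕ) :
    phiR m (n + 1) 0 = -phiRcoef m (n + 1) 0 := by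
  simp [phiR, Fin.sum_univ_succ]

theorem phiR_succ (hm : ∀ j, m (-j) = adjoint (m j)) (hRn : IsUnit (TmatR m n))
    (hRn1 : IsUnit (TmatR m (n + 1))) (hLn : IsUnit (TmatL m n)) (z : ℂ) :
    phiR m (n + 1) z = z • phiR m n z + phiLstar m n z * phiR m (n + 1) 0 := by
  rw [phiR_succ_zero]
  exact sub_sum_succ_eq_smul_add_mul z _ (fun k => adjoint (phiLcoef m n k)) _
    (phiRcoef_succ_succ hm hRn hRn1 hLn)

theorem phiL_eq_star_phiR (hm : ∀ j, m (-j) = adjoint (m j)) (h : IsUnit (TmatL m n)) (z : ℂ) :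
    phiL m n z = star (phiR (momRefl m) n (conj z)) := by
  simp [phiL, phiR, star_sum, star_smul, ← star_phiLcoef hm h]

theorem phiRstar_eq_star_phiLstar (hm : ∀ j, m (-j) = adjoint (m j)) (h : IsUnit (TmatR m n))
    (z : ℂ) : phiRstar m n z = star (phiLstar (momRefl m) n (conj z)) := by
  simp [phiRstar, phiLstar, star_sum, star_smul, ← star_phiRcoef hm h, star_eq_adjoint]

theorem phiL_succ (hm : ∀ j, m (-j) = adjoint (m j)) (hLn : IsUnit (TmatL m n))
    (hLn1 : IsUnit (TmatL m (n + 1))) (hRn : IsUnit (TmatR m n)) (z : ℂ) :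
    phiL m (n + 1) z = z • phiL m n z + phiL m (n + 1) 0 * phiRstar m n z := by
  have hR := phiR_succ (n := n) (momRefl_neg hm) (by rwa [TmatR_momRefl])
    (by rwa [TmatR_momRefl]) (by rwa [TmatL_momRefl]) (conj z)
  rw [phiL_eq_star_phiR hm hLn1, phiL_eq_star_phiR hm hLn, phiL_eq_star_phiR hm hLn1,
    phiRstar_eq_star_phiLstar hm hRn, hR, star_add, star_mul, star_smul, map_zero]
  simp

end Polynomials

/-- **Szegő (Verblunsky) recursions.** The monic right and left orthogonal polynomials obey
`Φ_{n+1}^R(z) = z Φ_n^R(z) + Φ_n^{L,*}(z) Φ_{n+1}^R(0)` and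
`Φ_{n+1}^L(z) = z Φ_n^L(z) + Φ_{n+1}^L(0) Φ_n^{R,*}(z)`. -/
theorem szego_verblunsky_recursion (μ : OpMeasure H) (n : ℕ)
    (hTR : ∀ m : ℕ, IsUnit (TmatR μ.mom m)) (hTL : ∀ m : ℕ, IsUnit (TmatL μ.mom m)) :
    (∀ z : ℂ, phiR μ.mom (n + 1) z =
        z • phiR μ.mom n z + phiLstar μ.mom n z * phiR μ.mom (n + 1) 0) ∧
    (∀ z : ℂ, phiL μ.mom (n + 1) z =
        z • phiL μ.mom n z + phiL μ.mom (n + 1) 0 * phiRstar μ.mom n z) :=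
  ⟨phiR_succ μ.mom_neg (hTR n) (hTR (n + 1)) (hTL n),
    phiL_succ μ.mom_neg (hTL n) (hTL (n + 1)) (hTR n)⟩
end
end

section
/- The right and left Verblunsky coefficients coincide: α_n^R := −(κ_n^{−R/2})† Φ_{n+1}^R(0)† κ_n^{L/2} equals α_n^L := −κ_n^{R/2} Φ_{n+1}^L(0)† (κ_n^{−L/2})†. -/
noncomputable section

open ContinuousLinearMap

variable {H : Type*} [NormedAddCommGroup H] [InnerProductSpace ℂ H] [CompleteSpace H]

/-! ### Auxiliary lemmas for `alphaR_eq_alphaL` -/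

section AuxAlpha

lemma ringInverseEqAux {M₀ : Type*} [MonoidWithZero M₀] {a b : M₀} (h1 : a * b = 1)
    (h2 : b * a = 1) : Ring.inverse a = b := by
  have h : a = ((⟨a, b, h1, h2⟩ : M₀ˣ) : M₀) := rfl
  rw [h, Ring.inverse_unit]
  rfl

lemma invSubmatrixAux {R : Type*} [Ring R] {n : ℕ} (M : Matrix (Fin n) (Fin n) R)
    (hM : IsUnit M) (e : Equiv.Perm (Fin n)) :
    Ring.inverse (M.submatrix e e) = (Ring.inverse M).submatrix e e := by
  apply ringInverseEqAux
  · rw [Matrix.submatrix_mul_equiv, Ring.mul_inverse_cancel _ hM, Matrix.submatrix_one_equiv]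
  · rw [Matrix.submatrix_mul_equiv, Ring.inverse_mul_cancel _ hM, Matrix.submatrix_one_equiv]

lemma sumRevAux {n : ℕ} {M : Type*} [AddCommMonoid M] (g : Fin n → M) :
    ∑ j, g j = ∑ j, g (Fin.rev j) :=
  (Fintype.sum_bijective Fin.rev Fin.rev_bijective _ _ fun _ => rfl).symm

lemma sumRev2Aux {n : ℕ} {M : Type*} [AddCommMonoid M] (F : Fin n → Fin n → M) :
    ∑ j, ∑ k, F j k = ∑ j, ∑ k, F (Fin.rev j) (Fin.rev k) := by
  rw [sumRevAux fun j => ∑ k, F j k]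
  exact Finset.sum_congr rfl fun j _ => sumRevAux _

lemma solveMulVecAux {R : Type*} [Ring R] {n : ℕ} (M : Matrix (Fin n) (Fin n) R)
    (hM : IsUnit M) (v w : Fin n → R) (h : M.mulVec v = w) :
    v = (Ring.inverse M).mulVec w := by
  rw [← h, Matrix.mulVec_mulVec, Ring.inverse_mul_cancel _ hM, Matrix.one_mulVec]

lemma solveVecMulAux {R : Type*} [Ring R] {n : ℕ} (M : Matrix (Fin n) (Fin n) R)
    (hM : IsUnit M) (v w : Fin n → R) (h : Matrix.vecMul v M = w) :
    v = Matrix.vecMul w (Ring.inverse M) := by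
  rw [← h, Matrix.vecMul_vecMul, Ring.mul_inverse_cancel _ hM, Matrix.vecMul_one]

lemma momCongrAux (mom : ℤ → H →L[ℂ] H) {s t : ℤ} (h : s = t) : mom s = mom t := by rw [h]

/-- `(T_n^L).submatrix rev rev = T_n^R`. -/
lemma TmatL_rev (mom : ℤ → H →L[ℂ] H) (n : ℕ) :
    (TmatL mom n).submatrix Fin.rev Fin.rev = TmatR mom n := by
  refine Matrix.ext fun i j => ?_
  have hi := i.is_lt; have hj := j.is_lt
  simp only [Matrix.submatrix_apply, TmatL, TmatR]
  apply momCongrAux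
  simp only [Fin.val_rev]
  omega

/-- Pointwise relation between the inverses of `T_n^R` and `T_n^L`. -/
lemma invTmatR_rev (mom : ℤ → H →L[ℂ] H) {n : ℕ} (hB : IsUnit (TmatL mom n)) (i j : Fin n) :
    Ring.inverse (TmatR mom n) i j = Ring.inverse (TmatL mom n) (Fin.rev i) (Fin.rev j) := by
  have h := invSubmatrixAux (TmatL mom n) hB Fin.revPerm
  have h2 : Ring.inverse (TmatR mom n)
      = (Ring.inverse (TmatL mom n)).submatrix Fin.rev Fin.rev := by
    rw [← TmatL_rev mom n]
    exact h
  rw [h2]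
  rfl

/-- `κ_n^L` in terms of `(T_n^R)⁻¹`. -/
lemma kappaL_eq_sum (mom : ℤ → H →L[ℂ] H)
    (hneg : ∀ j : ℤ, mom (-j) = adjoint (mom j)) (n : ℕ)
    (hB : IsUnit (TmatL mom n)) :
    kappaL mom n = mom 0 - ∑ j : Fin n, ∑ k : Fin n,
      mom (-((j : ℤ) + 1)) * (Ring.inverse (TmatR mom n) j k * mom ((k : ℤ) + 1)) := by
  unfold kappaL
  congr 1
  have hstep : ∀ k : Fin n,
      adjoint (xiL mom n k) * ((Ring.inverse (TmatL mom n)).mulVec (xiL mom n) k)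
      = ∑ i : Fin n, mom ((k : ℤ) - n)
          * (Ring.inverse (TmatL mom n) k i * mom ((n : ℤ) - i)) := by
    intro k
    have hadj : adjoint (xiL mom n k) = mom ((k : ℤ) - n) := by
      show adjoint (mom ((n : ℤ) - k)) = mom ((k : ℤ) - n)
      rw [← hneg]
      exact momCongrAux mom (by ring)
    rw [hadj]
    simp only [Matrix.mulVec, dotProduct, xiL]
    rw [Finset.mul_sum]
  rw [Finset.sum_congr rfl fun k _ => hstep k]
  conv_rhs => rw [sumRev2Aux fun j k => mom (-((j : ℤ) + 1))
      * (Ring.inverse (TmatR mom n) j k * mom ((k : ℤ) + 1))]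
  refine Finset.sum_congr rfl fun j _ => Finset.sum_congr rfl fun k _ => ?_
  have hj := j.is_lt; have hk := k.is_lt
  rw [invTmatR_rev mom hB, Fin.rev_rev, Fin.rev_rev]
  rw [momCongrAux mom (show ((j : ℤ) - n) = -(((Fin.rev j : Fin n) : ℤ) + 1) by
        simp only [Fin.val_rev]; omega),
      momCongrAux mom (show ((n : ℤ) - k) = ((Fin.rev k : Fin n) : ℤ) + 1 by
        simp only [Fin.val_rev]; omega)]

/-- `κ_n^R` in terms of `(T_n^L)⁻¹`. -/
lemma kappaR_eq_sum (mom : ℤ → H →L[ℂ] H)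
    (hneg : ∀ j : ℤ, mom (-j) = adjoint (mom j)) (n : ℕ)
    (hB : IsUnit (TmatL mom n)) :
    kappaR mom n = mom 0 - ∑ i : Fin n, ∑ k : Fin n,
      mom ((k : ℤ) + 1) * (Ring.inverse (TmatL mom n) k i * mom (-((i : ℤ) + 1))) := by
  unfold kappaR
  congr 1
  have hstep : ∀ k : Fin n,
      adjoint (nuR mom n k) * phiRcoef mom n k
      = ∑ i : Fin n, mom ((n : ℤ) - k)
          * (Ring.inverse (TmatR mom n) k i * mom ((i : ℤ) - n)) := by
    intro k
    have hadj : adjoint (nuR mom n k) = mom ((n : ℤ) - k) := by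
      show adjoint (mom ((k : ℤ) - n)) = mom ((n : ℤ) - k)
      rw [← hneg]
      exact momCongrAux mom (by ring)
    rw [hadj]
    unfold phiRcoef
    simp only [Matrix.mulVec, dotProduct, nuR]
    rw [Finset.mul_sum]
  rw [Finset.sum_congr rfl fun k _ => hstep k]
  rw [Finset.sum_comm]
  conv_rhs => rw [sumRev2Aux fun i k => mom ((k : ℤ) + 1)
      * (Ring.inverse (TmatL mom n) k i * mom (-((i : ℤ) + 1)))]
  refine Finset.sum_congr rfl fun i _ => Finset.sum_congr rfl fun k _ => ?_
  have hi := i.is_lt; have hk := k.is_lt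
  rw [show Ring.inverse (TmatL mom n) (Fin.rev k) (Fin.rev i)
      = Ring.inverse (TmatR mom n) k i from (invTmatR_rev mom hB k i).symm]
  rw [momCongrAux mom (show ((n : ℤ) - k) = ((Fin.rev k : Fin n) : ℤ) + 1 by
        simp only [Fin.val_rev]; omega),
      momCongrAux mom (show ((i : ℤ) - n) = -(((Fin.rev i : Fin n) : ℤ) + 1) by
        simp only [Fin.val_rev]; omega)]

/-- The cross term identity. -/
lemma crossAux (mom : ℤ → H →L[ℂ] H) (n : ℕ) (hB : IsUnit (TmatL mom n)) :
    ∑ j : Fin n, ∑ k : Fin n,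
      mom (-((j : ℤ) + 1)) * (Ring.inverse (TmatR mom n) j k * mom ((k : ℤ) - n))
    = ∑ i : Fin n, ∑ k : Fin n,
      mom ((k : ℤ) - n) * (Ring.inverse (TmatL mom n) k i * mom (-((i : ℤ) + 1))) := by
  rw [sumRev2Aux fun j k => mom (-((j : ℤ) + 1))
      * (Ring.inverse (TmatR mom n) j k * mom ((k : ℤ) - n))]
  rw [Finset.sum_comm]
  refine Finset.sum_congr rfl fun i _ => Finset.sum_congr rfl fun k _ => ?_
  have hi := i.is_lt; have hk := k.is_lt
  rw [invTmatR_rev mom hB, Fin.rev_rev, Fin.rev_rev]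
  rw [momCongrAux mom (show -(((Fin.rev k : Fin n) : ℤ) + 1) = (k : ℤ) - n by
        simp only [Fin.val_rev]; omega),
      momCongrAux mom (show ((Fin.rev i : Fin n) : ℤ) - n = -((i : ℤ) + 1) by
        simp only [Fin.val_rev]; omega)]

/-- The formula `κ_n^L Φ_{n+1}^R-coef_0 = μ_{-(n+1)} - X`. -/
lemma kappaL_mul_coef (mom : ℤ → H →L[ℂ] H)
    (hneg : ∀ j : ℤ, mom (-j) = adjoint (mom j)) (n : ℕ)
    (hA : IsUnit (TmatR mom n)) (hB : IsUnit (TmatL mom n))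
    (hT : IsUnit (TmatR mom (n + 1))) :
    kappaL mom n * phiRcoef mom (n + 1) 0 =
      mom (-((n : ℤ) + 1)) - ∑ j : Fin n, ∑ k : Fin n,
        mom (-((j : ℤ) + 1)) * (Ring.inverse (TmatR mom n) j k * mom ((k : ℤ) - n)) := by
  set a := phiRcoef mom (n + 1) with ha
  have haT : ∀ i : Fin (n + 1),
      (∑ j, TmatR mom (n + 1) i j * a j) = nuR mom (n + 1) i := by
    intro i
    have h : (TmatR mom (n + 1)).mulVec a = nuR mom (n + 1) := by
      rw [ha]
      unfold phiRcoef
      rw [Matrix.mulVec_mulVec, Ring.mul_inverse_cancel _ hT, Matrix.one_mulVec]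
    have h2 := congrFun h i
    simpa only [Matrix.mulVec, dotProduct] using h2
  -- the tail of `a`
  have hsucc : ∀ j : Fin n, a j.succ =
      (∑ k : Fin n, Ring.inverse (TmatR mom n) j k * mom ((k : ℤ) - n))
        - (∑ k : Fin n, Ring.inverse (TmatR mom n) j k * mom ((k : ℤ) + 1)) * a 0 := by
    have hveceq : (TmatR mom n).mulVec (fun j => a j.succ) =
        fun i : Fin n => mom ((i : ℤ) - n) - mom ((i : ℤ) + 1) * a 0 := by
      funext i
      have h := haT i.succ
      rw [Fin.sum_univ_succ] at h
      have e0' : TmatR mom (n + 1) i.succ 0 = mom ((i : ℤ) + 1) :=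
        momCongrAux mom (by push_cast [Fin.val_succ, Fin.val_zero]; ring)
      have e0 : TmatR mom (n + 1) i.succ 0 * a 0 = mom ((i : ℤ) + 1) * a 0 := by rw [e0']
      have e1 : ∀ j : Fin n,
          TmatR mom (n + 1) i.succ j.succ * a j.succ = TmatR mom n i j * a j.succ := by
        intro j
        rw [show TmatR mom (n + 1) i.succ j.succ = TmatR mom n i j from
          momCongrAux mom (by push_cast [Fin.val_succ]; ring)]
      have e2 : nuR mom (n + 1) i.succ = mom ((i : ℤ) - n) := by
        apply momCongrAux
        simp only [Fin.val_succ]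
        push_cast
        ring
      rw [e0, e2, Finset.sum_congr rfl fun j _ => e1 j] at h
      show (∑ j, TmatR mom n i j * a j.succ) = mom ((i : ℤ) - n) - mom ((i : ℤ) + 1) * a 0
      refine eq_sub_of_add_eq ?_
      rw [add_comm]
      exact h
    have h3 := solveMulVecAux _ hA _ _ hveceq
    intro j
    have hj := congrFun h3 j
    rw [hj]
    simp only [Matrix.mulVec, dotProduct]
    simp only [mul_sub, sub_mul, Finset.sum_sub_distrib, Finset.sum_mul, Finset.mul_sum,
      mul_assoc]
  -- row 0
  have h0 := haT 0
  rw [Fin.sum_univ_succ] at h0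
  have f0 : TmatR mom (n + 1) 0 0 = mom 0 := momCongrAux mom (by simp)
  have f1 : ∀ j : Fin n, TmatR mom (n + 1) 0 j.succ * a j.succ
      = mom (-((j : ℤ) + 1)) * a j.succ := by
    intro j
    have : TmatR mom (n + 1) 0 j.succ = mom (-((j : ℤ) + 1)) :=
      momCongrAux mom (by push_cast [Fin.val_succ, Fin.val_zero]; ring)
    rw [this]
  have f2 : nuR mom (n + 1) 0 = mom (-((n : ℤ) + 1)) :=
    momCongrAux mom (by push_cast [Fin.val_zero]; ring)
  rw [f0, f2, Finset.sum_congr rfl fun j _ => f1 j] at h0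
  -- substitute the tail formula
  simp only [hsucc] at h0
  rw [kappaL_eq_sum mom hneg n hB]
  simp only [mul_sub, sub_mul, Finset.sum_sub_distrib, Finset.sum_mul, Finset.mul_sum,
    mul_assoc] at h0 ⊢
  rw [← h0]
  abel

/-- The formula `Φ_{n+1}^L-coef_0 κ_n^R = μ_{-(n+1)} - Y`. -/
lemma coef_mul_kappaR (mom : ℤ → H →L[ℂ] H)
    (hneg : ∀ j : ℤ, mom (-j) = adjoint (mom j)) (n : ℕ)
    (hB : IsUnit (TmatL mom n)) (hS : IsUnit (TmatL mom (n + 1))) :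
    phiLcoef mom (n + 1) 0 * kappaR mom n =
      mom (-((n : ℤ) + 1)) - ∑ i : Fin n, ∑ k : Fin n,
        mom ((k : ℤ) - n) * (Ring.inverse (TmatL mom n) k i * mom (-((i : ℤ) + 1))) := by
  set b := phiLcoef mom (n + 1) with hb
  have hbS : ∀ j : Fin (n + 1),
      (∑ i, b i * TmatL mom (n + 1) i j) = nuR mom (n + 1) j := by
    intro j
    have h : Matrix.vecMul b (TmatL mom (n + 1)) = nuR mom (n + 1) := by
      rw [hb]
      unfold phiLcoef
      rw [Matrix.vecMul_vecMul, Ring.inverse_mul_cancel _ hS, Matrix.vecMul_one]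
    have h2 := congrFun h j
    simpa only [Matrix.vecMul, dotProduct] using h2
  -- the tail of `b`
  have hsucc : ∀ i : Fin n, b i.succ =
      (∑ k : Fin n, mom ((k : ℤ) - n) * Ring.inverse (TmatL mom n) k i)
        - b 0 * (∑ k : Fin n, mom ((k : ℤ) + 1) * Ring.inverse (TmatL mom n) k i) := by
    have hveceq : Matrix.vecMul (fun i => b i.succ) (TmatL mom n) =
        fun j : Fin n => mom ((j : ℤ) - n) - b 0 * mom ((j : ℤ) + 1) := by
      funext j
      have h := hbS j.succ
      rw [Fin.sum_univ_succ] at h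
      have e0' : TmatL mom (n + 1) 0 j.succ = mom ((j : ℤ) + 1) :=
        momCongrAux mom (by push_cast [Fin.val_succ, Fin.val_zero]; ring)
      have e0 : b 0 * TmatL mom (n + 1) 0 j.succ = b 0 * mom ((j : ℤ) + 1) := by rw [e0']
      have e1 : ∀ i : Fin n,
          b i.succ * TmatL mom (n + 1) i.succ j.succ = b i.succ * TmatL mom n i j := by
        intro i
        rw [show TmatL mom (n + 1) i.succ j.succ = TmatL mom n i j from
          momCongrAux mom (by push_cast [Fin.val_succ]; ring)]
      have e2 : nuR mom (n + 1) j.succ = mom ((j : ℤ) - n) := by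
        apply momCongrAux
        simp only [Fin.val_succ]
        push_cast
        ring
      rw [e0, e2, Finset.sum_congr rfl fun i _ => e1 i] at h
      show (∑ i, b i.succ * TmatL mom n i j) = mom ((j : ℤ) - n) - b 0 * mom ((j : ℤ) + 1)
      refine eq_sub_of_add_eq ?_
      rw [add_comm]
      exact h
    have h3 := solveVecMulAux _ hB _ _ hveceq
    intro i
    have hi := congrFun h3 i
    rw [hi]
    simp only [Matrix.vecMul, dotProduct]
    simp only [mul_sub, sub_mul, Finset.sum_sub_distrib, Finset.sum_mul, Finset.mul_sum,
      mul_assoc]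
  -- column 0
  have h0 := hbS 0
  rw [Fin.sum_univ_succ] at h0
  have f0 : TmatL mom (n + 1) 0 0 = mom 0 := momCongrAux mom (by simp)
  have f1 : ∀ i : Fin n, b i.succ * TmatL mom (n + 1) i.succ 0
      = b i.succ * mom (-((i : ℤ) + 1)) := by
    intro i
    have : TmatL mom (n + 1) i.succ 0 = mom (-((i : ℤ) + 1)) :=
      momCongrAux mom (by push_cast [Fin.val_succ, Fin.val_zero]; ring)
    rw [this]
  have f2 : nuR mom (n + 1) 0 = mom (-((n : ℤ) + 1)) :=
    momCongrAux mom (by push_cast [Fin.val_zero]; ring)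
  rw [f0, f2, Finset.sum_congr rfl fun i _ => f1 i] at h0
  simp only [hsucc] at h0
  rw [kappaR_eq_sum mom hneg n hB]
  simp only [mul_sub, sub_mul, Finset.sum_sub_distrib, Finset.sum_mul, Finset.mul_sum,
    mul_assoc] at h0 ⊢
  rw [← h0]
  abel

/-- The key identity `κ_n^L Φ_{n+1}^R(0) = Φ_{n+1}^L(0) κ_n^R`. -/
lemma keyIdentityAux (mom : ℤ → H →L[ℂ] H)
    (hneg : ∀ j : ℤ, mom (-j) = adjoint (mom j)) (n : ℕ)
    (hA : IsUnit (TmatR mom n)) (hB : IsUnit (TmatL mom n))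
    (hT : IsUnit (TmatR mom (n + 1))) (hS : IsUnit (TmatL mom (n + 1))) :
    kappaL mom n * phiR mom (n + 1) 0 = phiL mom (n + 1) 0 * kappaR mom n := by
  have hPR : phiR mom (n + 1) 0 = -(phiRcoef mom (n + 1) 0) := by
    unfold phiR
    rw [Fin.sum_univ_succ]
    simp [zero_pow]
  have hPL : phiL mom (n + 1) 0 = -(phiLcoef mom (n + 1) 0) := by
    unfold phiL
    rw [Fin.sum_univ_succ]
    simp [zero_pow]
  rw [hPR, hPL, mul_neg, neg_mul, neg_inj]
  rw [kappaL_mul_coef mom hneg n hA hB hT, coef_mul_kappaR mom hneg n hB hS,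
    crossAux mom n hB]

end AuxAlpha

/-- The right and left Verblunsky coefficients coincide:
`α_n^R := -(κ_n^{-R/2})† Φ_{n+1}^R(0)† κ_n^{L/2}` equals
`α_n^L := -κ_n^{R/2} Φ_{n+1}^L(0)† (κ_n^{-L/2})†`. -/
theorem alphaR_eq_alphaL (μ : OpMeasure H) (n : ℕ)
    (hTR : ∀ m : ℕ, IsUnit (TmatR μ.mom m)) (hTL : ∀ m : ℕ, IsUnit (TmatL μ.mom m))
    (sR sL : ℕ → H →L[ℂ] H)
    (hsR : IsSqrtSeq sR (kappaR μ.mom)) (hsL : IsSqrtSeq sL (kappaL μ.mom)) :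
    -(adjoint (Ring.inverse (sR n)) * adjoint (phiR μ.mom (n + 1) 0) * sL n) =
      -(sR n * adjoint (phiL μ.mom (n + 1) 0) * adjoint (Ring.inverse (sL n))) := by
  obtain ⟨hposR, hsqR, huR⟩ := hsR n
  obtain ⟨hposL, hsqL, huL⟩ := hsL n
  have hsaR : star (sR n) = sR n := hposR.isSelfAdjoint
  have hsaL : star (sL n) = sL n := hposL.isSelfAdjoint
  -- the key identity and its adjoint
  have hkey := keyIdentityAux μ.mom μ.mom_neg n (hTR n) (hTL n) (hTR (n + 1)) (hTL (n + 1))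
  have hkey2 : adjoint (phiR μ.mom (n + 1) 0) * (sL n * sL n)
      = (sR n * sR n) * adjoint (phiL μ.mom (n + 1) 0) := by
    have h := congrArg star hkey
    rw [star_mul, star_mul] at h
    rw [← hsqL, ← hsqR] at h
    rw [star_mul, hsaL, star_mul, hsaR] at h
    rw [← ContinuousLinearMap.star_eq_adjoint, ← ContinuousLinearMap.star_eq_adjoint]
    rw [← mul_assoc] at h ⊢
    rw [mul_assoc] at h
    exact h.trans (by rw [mul_assoc])
  -- adjoints of the inverses
  have hinv : ∀ s : H →L[ℂ] H, star s = s → IsUnit s →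
      adjoint (Ring.inverse s) = Ring.inverse s := by
    intro s hsa hu
    rw [← ContinuousLinearMap.star_eq_adjoint]
    have h1 : s * star (Ring.inverse s) = 1 := by
      calc s * star (Ring.inverse s) = star (Ring.inverse s * star s) := by
            rw [star_mul, star_star]
        _ = star (Ring.inverse s * s) := by rw [hsa]
        _ = 1 := by rw [Ring.inverse_mul_cancel _ hu, star_one]
    have h2 : star (Ring.inverse s) * s = 1 := by
      calc star (Ring.inverse s) * s = star (star s * Ring.inverse s) := by
            rw [star_mul, star_star]
        _ = star (s * Ring.inverse s) := by rw [hsa]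
        _ = 1 := by rw [Ring.mul_inverse_cancel _ hu, star_one]
    exact (ringInverseEqAux h1 h2).symm
  rw [hinv (sR n) hsaR huR, hinv (sL n) hsaL huL]
  have hcanR : Ring.inverse (sR n) * sR n = 1 := Ring.inverse_mul_cancel _ huR
  have hcanL : sL n * Ring.inverse (sL n) = 1 := Ring.mul_inverse_cancel _ huL
  have hLsimp : sL n * sL n * Ring.inverse (sL n) = sL n := by
    rw [mul_assoc, hcanL, mul_one]
  congr 1
  calc Ring.inverse (sR n) * adjoint (phiR μ.mom (n + 1) 0) * sL n
      = Ring.inverse (sR n) * adjoint (phiR μ.mom (n + 1) 0)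
          * (sL n * sL n * Ring.inverse (sL n)) := by rw [hLsimp]
    _ = Ring.inverse (sR n) * (adjoint (phiR μ.mom (n + 1) 0) * (sL n * sL n))
          * Ring.inverse (sL n) := by simp only [mul_assoc]
    _ = Ring.inverse (sR n) * (sR n * sR n * adjoint (phiL μ.mom (n + 1) 0))
          * Ring.inverse (sL n) := by rw [hkey2]
    _ = Ring.inverse (sR n) * sR n * (sR n * adjoint (phiL μ.mom (n + 1) 0))
          * Ring.inverse (sL n) := by simp only [mul_assoc]
    _ = sR n * adjoint (phiL μ.mom (n + 1) 0) * Ring.inverse (sL n) := by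
          rw [hcanR, one_mul]
end
end

section
/- Christoffel–Darboux formula (left version): for w, z with w̄z ≠ 1, (1 − w̄z) Σ_{k=0}^n φ_k^L(w)† φ_k^L(z) = φ_n^{R,*}(w)† φ_n^{R,*}(z) − w̄ z φ_n^L(w)† φ_n^L(z), given that the recursion (φ_{n+1}^L, φ_{n+1}^{R,*})ᵀ = A^L(α_n, z)(φ_n^L, φ_n^{R,*})ᵀ holds with J-unitary transfer matrices. -/
/-!
One step of the recursion carries `φ_n^{R,*}(w)† φ_n^{R,*}(z) - w̄z φ_n^L(w)† φ_n^L(z)` to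
`φ_{n+1}^{R,*}(w)† φ_{n+1}^{R,*}(z) - φ_{n+1}^L(w)† φ_{n+1}^L(z)` (the `J`-unitarity of the
transfer matrix), so from `n` to `n + 1` the right-hand side grows by exactly the new term
`(1 - w̄z) φ_{n+1}^L(w)† φ_{n+1}^L(z)` of the left-hand side. Writing `(ρ^L)⁻² = (1 - α†α)⁻¹` and
`(ρ^R)⁻² = (1 - αα†)⁻¹`, the step identity reduces to the push-through identity
`(1 - αα†)⁻¹ α = α (1 - α†α)⁻¹`.
-/

noncomputable section

open ContinuousLinearMap

open Finset

variable {H : Type*} [NormedAddCommGroup H] [InnerProductSpace ℂ H] [CompleteSpace H]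

theorem Ring.inverse_one_sub_mul_mul {R : Type*} [Ring R] {a b : R}
    (hab : IsUnit (1 - a * b)) (hba : IsUnit (1 - b * a)) :
    Ring.inverse (1 - a * b) * a = a * Ring.inverse (1 - b * a) :=
  calc Ring.inverse (1 - a * b) * a
      = Ring.inverse (1 - a * b) * a * ((1 - b * a) * Ring.inverse (1 - b * a)) := by
        rw [Ring.mul_inverse_cancel _ hba, mul_one]
    _ = Ring.inverse (1 - a * b) * (1 - a * b) * a * Ring.inverse (1 - b * a) := by
        noncomm_ring
    _ = a * Ring.inverse (1 - b * a) := by rw [Ring.inverse_mul_cancel _ hab, one_mul]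

theorem transfer_form_identity {𝕜 R : Type*} [CommRing 𝕜] [Ring R] [Algebra 𝕜 R] {α β : R}
    (hαβ : IsUnit (1 - α * β)) (hβα : IsUnit (1 - β * α)) (a b c d : R) (x z : 𝕜) :
    (b - x • (a * β)) * Ring.inverse (1 - α * β) * (d - z • (α * c)) -
        (x • a - b * α) * Ring.inverse (1 - β * α) * (z • c - β * d) =
      b * d - (x * z) • (a * c) := by
  set Q := Ring.inverse (1 - α * β)
  set P := Ring.inverse (1 - β * α)
  have hQα : Q * α = α * P := Ring.inverse_one_sub_mul_mul hαβ hβα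
  have hPβ : P * β = β * Q := Ring.inverse_one_sub_mul_mul hβα hαβ
  have hQ : Q - α * P * β = 1 := by
    rw [← hQα, mul_assoc, ← mul_one_sub, Ring.inverse_mul_cancel _ hαβ]
  have hP : P - β * Q * α = 1 := by
    rw [← hPβ, mul_assoc, ← mul_one_sub, Ring.inverse_mul_cancel _ hβα]
  have expand : (b - x • (a * β)) * Q * (d - z • (α * c)) -
        (x • a - b * α) * P * (z • c - β * d) - (b * d - (x * z) • (a * c)) =
      b * (Q - α * P * β - 1) * d - (x * z) • (a * (P - β * Q * α - 1) * c) +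
        z • (b * (α * P - Q * α) * c) + x • (a * (P * β - β * Q) * d) := by
    simp only [mul_sub, sub_mul, smul_sub, smul_mul_assoc, mul_smul_comm, smul_smul, mul_assoc,
      mul_one]
    module
  rw [← sub_eq_zero, expand, hQ, hP, hQα, hPβ]
  simp

theorem smul_sum_range_eq_of_step {𝕜 M : Type*} [Ring 𝕜] [AddCommGroup M] [Module 𝕜 M]
    {f g : ℕ → M} {t : 𝕜} (h0 : g 0 = f 0) (hstep : ∀ n, g (n + 1) - f (n + 1) = g n - t • f n)
    (n : ℕ) : (1 - t) • ∑ k ∈ range (n + 1), f k = g n - t • f n := by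
  induction n with
  | zero => simp [h0, sub_smul]
  | succ n ih => rw [sum_range_succ, smul_add, ih, ← hstep, sub_smul, one_smul]; abel

theorem transfer_step_form {R : Type*} [Ring R] [StarRing R] [Algebra ℂ R] [StarModule ℂ R]
    {α ρL ρR : R} (hρL : IsSelfAdjoint ρL) (hρL2 : ρL * ρL = 1 - star α * α) (hρLu : IsUnit ρL)
    (hρR : IsSelfAdjoint ρR) (hρR2 : ρR * ρR = 1 - α * star α) (hρRu : IsUnit ρR)
    (a b c d : R) (w z : ℂ) :
    star (Ring.inverse ρR * b - w • (Ring.inverse ρR * α * a)) *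
          (Ring.inverse ρR * d - z • (Ring.inverse ρR * α * c)) -
        star (w • (Ring.inverse ρL * a) - Ring.inverse ρL * star α * b) *
          (z • (Ring.inverse ρL * c) - Ring.inverse ρL * star α * d) =
      star b * d - (starRingEnd ℂ w * z) • (star a * c) := by
  have hinvR : Ring.inverse ρR * Ring.inverse ρR = Ring.inverse (1 - α * star α) := by
    rw [← hρR2, Ring.mul_inverse_rev' (Commute.refl ρR)]
  have hinvL : Ring.inverse ρL * Ring.inverse ρL = Ring.inverse (1 - star α * α) := by
    rw [← hρL2, Ring.mul_inverse_rev' (Commute.refl ρL)]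
  have hstarR := hρR.ringInverse.star_eq
  have hstarL := hρL.ringInverse.star_eq
  rw [← transfer_form_identity (hρR2 ▸ hρRu.mul hρRu) (hρL2 ▸ hρLu.mul hρLu), ← hinvR, ← hinvL]
  simp only [star_sub, star_smul, star_mul, star_star, hstarR, hstarL, Complex.star_def]
  noncomm_ring

theorem christoffel_darboux_left_general
    (α pL pR : ℕ → H →L[ℂ] H) (u v : ℕ → ℂ → H →L[ℂ] H)
    (hpL : ∀ n, (pL n).IsPositive ∧ pL n * pL n = 1 - adjoint (α n) * α n ∧ IsUnit (pL n))
    (hpR : ∀ n, (pR n).IsPositive ∧ pR n * pR n = 1 - α n * adjoint (α n) ∧ IsUnit (pR n))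
    (hu0 : ∀ z : ℂ, u 0 z = 1) (hv0 : ∀ z : ℂ, v 0 z = 1)
    (hrec : ∀ (n : ℕ) (z : ℂ),
      u (n + 1) z = z • (Ring.inverse (pL n) * u n z) -
          Ring.inverse (pL n) * adjoint (α n) * v n z ∧
      v (n + 1) z = Ring.inverse (pR n) * v n z -
          z • (Ring.inverse (pR n) * α n * u n z))
    (n : ℕ) (w z : ℂ) :
    (1 - (starRingEnd ℂ) w * z) •
        ∑ k ∈ Finset.range (n + 1), adjoint (u k w) * u k z =
      adjoint (v n w) * v n z -
        ((starRingEnd ℂ) w * z) • (adjoint (u n w) * u n z) := by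
  simp only [← ContinuousLinearMap.star_eq_adjoint] at hpL hpR hrec ⊢
  refine smul_sum_range_eq_of_step (f := fun k => star (u k w) * u k z)
    (g := fun k => star (v k w) * v k z) (by simp [hu0, hv0]) (fun k => ?_) n
  obtain ⟨hρL, hρL2, hρLu⟩ := hpL k
  obtain ⟨hρR, hρR2, hρRu⟩ := hpR k
  rw [(hrec k w).1, (hrec k w).2, (hrec k z).1, (hrec k z).2]
  exact transfer_step_form hρL.isSelfAdjoint hρL2 hρLu hρR.isSelfAdjoint hρR2 hρRu _ _ _ _ w z

/-- **Christoffel–Darboux formula (left version).** Let `u n = φ_n^L` and `v n = φ_n^{R,*}`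
be the normalized left orthogonal polynomials and reversed right orthogonal polynomials of a
nontrivial positive operator-valued measure on the circle, i.e. `u 0 = v 0 = I` and
`(φ_{n+1}^L, φ_{n+1}^{R,*})ᵀ = A^L(α_n, z) (φ_n^L, φ_n^{R,*})ᵀ` with J-unitary transfer
matrices `A^L(α,z) = [[z(ρ^L)⁻¹, -(ρ^L)⁻¹α†], [-z(ρ^R)⁻¹α, (ρ^R)⁻¹]]`, where the Verblunsky
coefficients `α n` are strict contractions and `pL n = (I - α_n†α_n)^{1/2}`,
`pR n = (I - α_nα_n†)^{1/2}` are the positive (invertible) square roots.  Then for `w̄z ≠ 1`,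
`(1 - w̄z) Σ_{k=0}^n φ_k^L(w)† φ_k^L(z) = φ_n^{R,*}(w)† φ_n^{R,*}(z) - w̄z φ_n^L(w)† φ_n^L(z)`. -/
theorem christoffel_darboux_left
    (α pL pR : ℕ → H →L[ℂ] H) (u v : ℕ → ℂ → H →L[ℂ] H)
    (hα : ∀ n, ‖α n‖ < 1)
    (hpL : ∀ n, (pL n).IsPositive ∧ pL n * pL n = 1 - adjoint (α n) * α n ∧ IsUnit (pL n))
    (hpR : ∀ n, (pR n).IsPositive ∧ pR n * pR n = 1 - α n * adjoint (α n) ∧ IsUnit (pR n))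
    (hu0 : ∀ z : ℂ, u 0 z = 1) (hv0 : ∀ z : ℂ, v 0 z = 1)
    (hrec : ∀ (n : ℕ) (z : ℂ),
      u (n + 1) z = z • (Ring.inverse (pL n) * u n z) -
          Ring.inverse (pL n) * adjoint (α n) * v n z ∧
      v (n + 1) z = Ring.inverse (pR n) * v n z -
          z • (Ring.inverse (pR n) * α n * u n z))
    (n : ℕ) (w z : ℂ) (hwz : (starRingEnd ℂ) w * z ≠ 1) :
    (1 - (starRingEnd ℂ) w * z) •
        ∑ k ∈ Finset.range (n + 1), adjoint (u k w) * u k z =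
      adjoint (v n w) * v n z -
        ((starRingEnd ℂ) w * z) • (adjoint (u n w) * u n z) :=
  christoffel_darboux_left_general α pL pR u v hpL hpR hu0 hv0 hrec n w z
end
end

section
/- For z on the unit circle, the normalized operator orthogonal polynomials satisfy φ_n^R(z) φ_n^R(z)† = φ_n^L(z)† φ_n^L(z). -/
noncomputable section

open ContinuousLinearMap

variable {H : Type*} [NormedAddCommGroup H] [InnerProductSpace ℂ H] [CompleteSpace H]

private lemma star_mom_aux {H : Type*} [NormedAddCommGroup H] [InnerProductSpace ℂ H]
    [CompleteSpace H] {m : ℤ → H →L[ℂ] H}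
    (hm : ∀ j : ℤ, m (-j) = ContinuousLinearMap.adjoint (m j)) (x : ℤ) :
    star (m x) = m (-x) := by
  rw [ContinuousLinearMap.star_eq_adjoint, ← hm]

set_option maxHeartbeats 1000000 in
/-- For `z` on the unit circle, the normalized operator orthogonal polynomials
`φ_n^R = Φ_n^R κ_n^{-R/2}` and `φ_n^L = κ_n^{-L/2} Φ_n^L` satisfy
`φ_n^R(z) φ_n^R(z)† = φ_n^L(z)† φ_n^L(z)`. -/
theorem phiR_mul_adjoint_eq_adjoint_mul_phiL (μ : OpMeasure H) (n : ℕ)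
    (hTR : ∀ m : ℕ, IsUnit (TmatR μ.mom m)) (hTL : ∀ m : ℕ, IsUnit (TmatL μ.mom m))
    (sR sL : ℕ → H →L[ℂ] H)
    (hsR : IsSqrtSeq sR (kappaR μ.mom)) (hsL : IsSqrtSeq sL (kappaL μ.mom)) :
    ∀ z : ℂ, ‖z‖ = 1 →
      (phiR μ.mom n z * Ring.inverse (sR n)) *
          adjoint (phiR μ.mom n z * Ring.inverse (sR n)) =
        adjoint (Ring.inverse (sL n) * phiL μ.mom n z) *
          (Ring.inverse (sL n) * phiL μ.mom n z) := by
  intro z hz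
  classical
  obtain ⟨hsRpos, hsRsq, hsRunit⟩ := hsR n
  obtain ⟨hsLpos, hsLsq, hsLunit⟩ := hsL n
  set m := μ.mom with hmdef
  have hm : ∀ j : ℤ, m (-j) = adjoint (m j) := μ.mom_neg
  have hstarm : ∀ x : ℤ, star (m x) = m (-x) := star_mom_aux hm
  -- scalar facts
  set w : ℂ := (starRingEnd ℂ) z with hwdef
  have hz1 : z * w = 1 := by
    rw [hwdef, Complex.mul_conj]; norm_cast
    simp [Complex.normSq_eq_norm_sq, hz]
  have hzw : ∀ k : ℕ, z ^ k * w ^ k = 1 := fun k => by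
    rw [← mul_pow, hz1, one_pow]
  have hwz : w ^ n * z ^ n = 1 := by rw [← mul_pow, mul_comm, hz1, one_pow]
  -- matrices
  set Tn := TmatR m n with hTndef
  set K := Ring.inverse Tn with hKdef
  set T := TmatR m (n + 1) with hTdef
  set G := Ring.inverse T with hGdef
  set TL := TmatL m n with hTLdef
  set KL := Ring.inverse TL with hKLdef
  have hTnK : Tn * K = 1 := Ring.mul_inverse_cancel _ (hTR n)
  have hKTn : K * Tn = 1 := Ring.inverse_mul_cancel _ (hTR n)
  have hGT : G * T = 1 := Ring.inverse_mul_cancel _ (hTR (n + 1))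
  have hKLTL : KL * TL = 1 := Ring.inverse_mul_cancel _ (hTL n)
  -- entry values
  have hTval : ∀ i j : Fin (n + 1), T i j = m ((i : ℤ) - (j : ℤ)) := fun i j => by
    rw [hTdef]; rfl
  have hTnval : ∀ i j : Fin n, Tn i j = m ((i : ℤ) - (j : ℤ)) := fun i j => by
    rw [hTndef]; rfl
  have hTLval : ∀ i j : Fin n, TL i j = m ((j : ℤ) - (i : ℤ)) := fun i j => by
    rw [hTLdef]; rfl
  set ν := nuR m n with hνdef
  set ξ := xiL m n with hξdef
  have hνval : ∀ k : Fin n, ν k = m ((k : ℤ) - (n : ℤ)) := fun k => by rw [hνdef]; rfl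
  have hξval : ∀ k : Fin n, ξ k = m ((n : ℤ) - (k : ℤ)) := fun k => by rw [hξdef]; rfl
  -- star symmetry of the Toeplitz matrices and their inverses
  have hstarT : star T = T := by
    refine Matrix.ext fun i j => ?_
    rw [Matrix.star_apply, hTval, hTval, hstarm]
    congr 1; ring
  have hstarTn : star Tn = Tn := by
    refine Matrix.ext fun i j => ?_
    rw [Matrix.star_apply, hTnval, hTnval, hstarm]
    congr 1; ring
  have hstarTL : star TL = TL := by
    refine Matrix.ext fun i j => ?_
    rw [Matrix.star_apply, hTLval, hTLval, hstarm]
    congr 1; ring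
  have hstarG : star G = G := by rw [hGdef, ← Ring.inverse_star, hstarT]
  have hstarK : star K = K := by rw [hKdef, ← Ring.inverse_star, hstarTn]
  have hstarKL : star KL = KL := by rw [hKLdef, ← Ring.inverse_star, hstarTL]
  have hGsym : ∀ i j, star (G i j) = G j i := fun i j => by
    conv_rhs => rw [← hstarG]
    rw [Matrix.star_apply]
  have hKsym : ∀ i j, star (K i j) = K j i := fun i j => by
    conv_rhs => rw [← hstarK]
    rw [Matrix.star_apply]
  have hKLsym : ∀ i j, star (KL i j) = KL j i := fun i j => by
    conv_rhs => rw [← hstarKL]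
    rw [Matrix.star_apply]
  -- kappa facts
  set κR := kappaR m n with hκRdef
  set κL := kappaL m n with hκLdef
  have hκRsa : star κR = κR := by
    rw [← hsRsq, star_mul, hsRpos.isSelfAdjoint.star_eq]
  have hκLsa : star κL = κL := by
    rw [← hsLsq, star_mul, hsLpos.isSelfAdjoint.star_eq]
  set sRi := Ring.inverse (sR n) with hsRidef
  set sLi := Ring.inverse (sL n) with hsLidef
  have hsRi1 : sR n * sRi = 1 := Ring.mul_inverse_cancel _ hsRunit
  have hsRi2 : sRi * sR n = 1 := Ring.inverse_mul_cancel _ hsRunit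
  have hsLi1 : sL n * sLi = 1 := Ring.mul_inverse_cancel _ hsLunit
  have hsLi2 : sLi * sL n = 1 := Ring.inverse_mul_cancel _ hsLunit
  have hstarsRi : star sRi = sRi := by
    rw [hsRidef, ← Ring.inverse_star, hsRpos.isSelfAdjoint.star_eq]
  have hstarsLi : star sLi = sLi := by
    rw [hsLidef, ← Ring.inverse_star, hsLpos.isSelfAdjoint.star_eq]
  set κRi := sRi * sRi with hκRidef
  set κLi := sLi * sLi with hκLidef
  have hκRκRi : κR * κRi = 1 := by
    rw [← hsRsq, hκRidef, mul_assoc, ← mul_assoc (sR n) sRi, hsRi1, one_mul, hsRi1]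
  have hκLκLi : κL * κLi = 1 := by
    rw [← hsLsq, hκLidef, mul_assoc, ← mul_assoc (sL n) sLi, hsLi1, one_mul, hsLi1]
  have hκRκRiκR : κR * κRi * κR = κR := by rw [hκRκRi, one_mul]
  have hκLκLiκL : κL * κLi * κL = κL := by rw [hκLκLi, one_mul]
  -- coefficient vectors
  set a := phiRcoef m n with hadef
  set b := phiLcoef m n with hbdef
  have ha : a = K.mulVec ν := by rw [hadef, hKdef, hTndef, hνdef]; rfl
  have hb : b = Matrix.vecMul ν KL := by rw [hbdef, hKLdef, hTLdef, hνdef]; rfl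
  have hTna : Tn.mulVec a = ν := by
    rw [ha, Matrix.mulVec_mulVec, hTnK, Matrix.one_mulVec]
  have hTna' : ∀ i : Fin n, ∑ k : Fin n, Tn i k * a k = ν i := fun i => congrFun hTna i
  have hbTL : Matrix.vecMul b TL = ν := by
    rw [hb, Matrix.vecMul_vecMul, hKLTL, Matrix.vecMul_one]
  have hbTL' : ∀ q : Fin n, ∑ k : Fin n, b k * m ((q : ℤ) - k) = m ((q : ℤ) - n) := fun q => by
    have h : ∑ k : Fin n, b k * TL k q = ν q := congrFun hbTL q
    calc ∑ k : Fin n, b k * m ((q : ℤ) - k)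
        = ∑ k : Fin n, b k * TL k q :=
          Finset.sum_congr rfl fun k _ => by rw [hTLval]
      _ = ν q := h
      _ = m ((q : ℤ) - n) := hνval q
  have hbadj : ∀ q : Fin n,
      ∑ k : Fin n, m ((k : ℤ) - q) * star (b k) = m ((n : ℤ) - q) := fun q => by
    have h := congrArg star (hbTL' q)
    rw [star_sum] at h
    simp only [star_mul, hstarm] at h
    rw [show ((n : ℤ) - q) = -((q : ℤ) - n) by ring, ← h]
    exact Finset.sum_congr rfl fun k _ => by
      rw [show ((k : ℤ) - q) = -((q : ℤ) - k) by ring]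
  have hbstar : ∀ k : Fin n, star (b k) = (KL.mulVec ξ) k := fun k => by
    rw [hb]
    show star (∑ q : Fin n, ν q * KL q k) = ∑ q : Fin n, KL k q * ξ q
    rw [star_sum]
    refine Finset.sum_congr rfl fun q _ => ?_
    rw [star_mul, hKLsym, hνval, hstarm, hξval]
    congr 2
    ring
  have hκLformula : κL = m 0 - ∑ k : Fin n, ν k * star (b k) := by
    rw [hκLdef]
    show m 0 - ∑ k : Fin n, adjoint (ξ k) * (KL.mulVec ξ) k = _
    congr 1
    refine Finset.sum_congr rfl fun k _ => ?_
    rw [← hbstar k, ← ContinuousLinearMap.star_eq_adjoint, hξval, hstarm, hνval]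
    congr 2
    ring
  have hκRf : κR = m 0 - ∑ k : Fin n, m ((n : ℤ) - k) * a k := by
    rw [hκRdef]
    show m 0 - ∑ k : Fin n, adjoint (ν k) * a k = _
    congr 1
    refine Finset.sum_congr rfl fun k _ => ?_
    rw [← ContinuousLinearMap.star_eq_adjoint, hνval, hstarm]
    congr 2
    ring
  -- special entries of T
  have hTlastlast : T (Fin.last n) (Fin.last n) = m 0 := by
    rw [hTval]; congr 1 <;> simp
  have hTlastcast : ∀ j : Fin n, T (Fin.last n) (Fin.castSucc j) = m ((n : ℤ) - j) :=
    fun j => by rw [hTval]; congr 1 <;> simp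
  have hTcastlast : ∀ i : Fin n, T (Fin.castSucc i) (Fin.last n) = ν i := fun i => by
    rw [hTval, hνval]; congr 1 <;> simp
  have hTcastcast : ∀ i j : Fin n, T (Fin.castSucc i) (Fin.castSucc j) = Tn i j :=
    fun i j => by rw [hTval, hTnval]; congr 1 <;> simp
  have hT00 : T 0 0 = m 0 := by rw [hTval]; congr 1 <;> simp
  have hT0succrev : ∀ j : Fin n, T 0 (Fin.succ j.rev) = ν j := fun j => by
    rw [hTval, hνval]; congr 1
    have hj := j.is_lt
    simp only [Fin.val_zero, Fin.val_succ, Fin.val_rev]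
    omega
  have hTsucc0 : ∀ i : Fin n, T (Fin.succ i) 0 = m ((i : ℤ) + 1) := fun i => by
    rw [hTval]; congr 1 <;> (simp only [Fin.val_succ, Fin.val_zero]; omega)
  have hTsuccsucc : ∀ i j : Fin n, T (Fin.succ i) (Fin.succ j) = Tn i j := fun i j => by
    rw [hTval, hTnval]; congr 1
    simp only [Fin.val_succ]
    omega
  have hTsuccsuccrev : ∀ i j : Fin n,
      T (Fin.succ i) (Fin.succ j.rev) = m ((j : ℤ) - ((n : ℤ) - 1 - i)) := fun i j => by
    rw [hTval]; congr 1
    have hj := j.is_lt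
    have hi := i.is_lt
    simp only [Fin.val_succ, Fin.val_rev]
    omega
  have hTnK' : ∀ i j : Fin n,
      ∑ k : Fin n, Tn i k * K k j = (1 : Matrix (Fin n) (Fin n) (H →L[ℂ] H)) i j :=
    fun i j => by
      have h := congrFun (congrFun hTnK i) j
      simpa [Matrix.mul_apply] using h
  -- System 1 : the right monic polynomial
  set cvec : Fin (n + 1) → (H →L[ℂ] H) := Fin.snoc (fun k => -(a k)) 1 with hcvecdef
  have hcvec1 : ∀ j : Fin n, cvec (Fin.castSucc j) = -(a j) := fun j => by
    simp [hcvecdef]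
  have hcvec2 : cvec (Fin.last n) = 1 := by simp [hcvecdef]
  have hTc : T.mulVec cvec = Pi.single (Fin.last n) κR := by
    funext i
    have hsplit : T.mulVec cvec i
        = ∑ j : Fin n, T i (Fin.castSucc j) * -(a j) + T i (Fin.last n) := by
      show ∑ j : Fin (n + 1), T i j * cvec j = _
      rw [Fin.sum_univ_castSucc, hcvec2, mul_one]
      congr 1
      exact Finset.sum_congr rfl fun j _ => by rw [hcvec1]
    rw [hsplit, Pi.single_apply]
    refine Fin.lastCases ?_ (fun i' => ?_) i
    · rw [if_pos rfl]
      have h1 : ∑ j : Fin n, T (Fin.last n) (Fin.castSucc j) * -(a j)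
          = -∑ j : Fin n, m ((n : ℤ) - j) * a j := by
        rw [← Finset.sum_neg_distrib]
        exact Finset.sum_congr rfl fun j _ => by rw [hTlastcast, mul_neg]
      rw [h1, hTlastlast, hκRf, neg_add_eq_sub]
    · rw [if_neg (Fin.castSucc_lt_last i').ne]
      have h1 : ∑ j : Fin n, T (Fin.castSucc i') (Fin.castSucc j) * -(a j) = -(ν i') := by
        rw [← hTna' i', ← Finset.sum_neg_distrib]
        exact Finset.sum_congr rfl fun j _ => by rw [hTcastcast, mul_neg]
      rw [h1, hTcastlast, neg_add_cancel]
  have hcvecG : cvec = fun i => G i (Fin.last n) * κR := by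
    have h := congrArg (fun v => G.mulVec v) hTc
    simp only [Matrix.mulVec_mulVec] at h
    rw [hGT, Matrix.one_mulVec, Matrix.mulVec_single] at h
    exact h
  have hGa : ∀ k : Fin n, G (Fin.castSucc k) (Fin.last n) * κR = -(a k) := fun k => by
    rw [← congrFun hcvecG (Fin.castSucc k), hcvec1]
  have hGnn : G (Fin.last n) (Fin.last n) * κR = 1 := by
    rw [← congrFun hcvecG (Fin.last n), hcvec2]
  have hκRGnn : κR * G (Fin.last n) (Fin.last n) = 1 := by
    have h : G (Fin.last n) (Fin.last n) = κRi := by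
      calc G (Fin.last n) (Fin.last n)
          = G (Fin.last n) (Fin.last n) * (κR * κRi) := by rw [hκRκRi, mul_one]
        _ = G (Fin.last n) (Fin.last n) * κR * κRi := by rw [mul_assoc]
        _ = κRi := by rw [hGnn, one_mul]
    rw [h, hκRκRi]
  -- System 2 : the reversed left polynomial
  set cstar : Fin (n + 1) → (H →L[ℂ] H) := Fin.cons 1 (fun j => -(star (b j.rev)))
    with hcstardef
  have hcstar0 : cstar 0 = 1 := by simp [hcstardef]
  have hcstarsucc : ∀ j : Fin n, cstar (Fin.succ j) = -(star (b j.rev)) := fun j => by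
    simp [hcstardef]
  have hTcstar : T.mulVec cstar = Pi.single (0 : Fin (n + 1)) κL := by
    funext i
    have hsplit : T.mulVec cstar i
        = T i 0 + ∑ j : Fin n, T i (Fin.succ j.rev) * -(star (b j)) := by
      show ∑ j : Fin (n + 1), T i j * cstar j = _
      rw [Fin.sum_univ_succ, hcstar0, mul_one]
      congr 1
      calc ∑ j : Fin n, T i (Fin.succ j) * cstar (Fin.succ j)
          = ∑ j : Fin n, T i (Fin.succ j) * -(star (b j.rev)) :=
            Finset.sum_congr rfl fun j _ => by rw [hcstarsucc]
        _ = ∑ j : Fin n, T i (Fin.succ j.rev) * -(star (b j)) :=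
            Fintype.sum_bijective Fin.rev (Fin.rev_involutive.bijective) _ _
              (fun j => by rw [Fin.rev_rev])
    rw [hsplit, Pi.single_apply]
    refine Fin.cases ?_ (fun i' => ?_) i
    · rw [if_pos rfl]
      have h1 : ∑ j : Fin n, T (0 : Fin (n + 1)) (Fin.succ j.rev) * -(star (b j))
          = -∑ j : Fin n, ν j * star (b j) := by
        rw [← Finset.sum_neg_distrib]
        exact Finset.sum_congr rfl fun j _ => by rw [hT0succrev, mul_neg]
      rw [h1, hT00, hκLformula, ← sub_eq_add_neg]
    · rw [if_neg (Fin.succ_ne_zero i')]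
      have hbadj' : ∑ j : Fin n, m ((j : ℤ) - ((n : ℤ) - 1 - i')) * star (b j)
          = m ((i' : ℤ) + 1) := by
        have h2 := hbadj i'.rev
        have h3 : ((i'.rev : Fin n) : ℤ) = (n : ℤ) - 1 - (i' : ℤ) := by
          have := i'.is_lt
          simp only [Fin.val_rev]
          omega
        rw [h3] at h2
        rw [h2, show (n : ℤ) - ((n : ℤ) - 1 - (i' : ℤ)) = (i' : ℤ) + 1 by ring]
      have h1 : ∑ j : Fin n, T (Fin.succ i') (Fin.succ j.rev) * -(star (b j))
          = -(m ((i' : ℤ) + 1)) := by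
        rw [← hbadj', ← Finset.sum_neg_distrib]
        exact Finset.sum_congr rfl fun j _ => by rw [hTsuccsuccrev, mul_neg]
      rw [h1, hTsucc0, add_neg_cancel]
  have hcstarG : cstar = fun i => G i 0 * κL := by
    have h := congrArg (fun v => G.mulVec v) hTcstar
    simp only [Matrix.mulVec_mulVec] at h
    rw [hGT, Matrix.one_mulVec, Matrix.mulVec_single] at h
    exact h
  have hG00 : G 0 0 * κL = 1 := by
    rw [← congrFun hcstarG 0, hcstar0]
  have hGb : ∀ j : Fin n, G (Fin.succ j) 0 * κL = -(star (b j.rev)) := fun j => by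
    rw [← congrFun hcstarG (Fin.succ j), hcstarsucc]
  have hκLG00 : κL * G 0 0 = 1 := by
    have h : G (0 : Fin (n + 1)) 0 = κLi := by
      calc G (0 : Fin (n + 1)) 0 = G 0 0 * (κL * κLi) := by rw [hκLκLi, mul_one]
        _ = G 0 0 * κL * κLi := by rw [mul_assoc]
        _ = κLi := by rw [hG00, one_mul]
    rw [h, hκLκLi]
  -- F1 : Schur-type identity at the last corner
  have hstara : ∀ j : Fin n, star (a j) = ∑ k : Fin n, m ((n : ℤ) - k) * K k j := fun j => by
    rw [ha]
    show star (∑ k : Fin n, K j k * ν k) = _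
    rw [star_sum]
    refine Finset.sum_congr rfl fun k _ => ?_
    rw [star_mul, hKsym, hνval, hstarm]
    congr 2
    ring
  have hF1w : ∀ (j : Fin n) (i : Fin (n + 1)),
      (Fin.snoc (fun i' : Fin n => K i' j) 0 : Fin (n + 1) → (H →L[ℂ] H)) i
        = G i (Fin.castSucc j) + G i (Fin.last n) * star (a j) := by
    intro j
    have hTwj : T.mulVec (Fin.snoc (fun i' : Fin n => K i' j) 0)
        = Pi.single (Fin.castSucc j) 1 + Pi.single (Fin.last n) (star (a j)) := by
      funext i
      have hsplit : T.mulVec (Fin.snoc (fun i' : Fin n => K i' j) 0) i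
          = ∑ k : Fin n, T i (Fin.castSucc k) * K k j := by
        show ∑ k : Fin (n + 1),
            T i k * (Fin.snoc (fun i' : Fin n => K i' j) 0 : Fin (n + 1) → (H →L[ℂ] H)) k = _
        rw [Fin.sum_univ_castSucc]
        simp only [Fin.snoc_castSucc, Fin.snoc_last, mul_zero, add_zero]
      rw [hsplit, Pi.add_apply, Pi.single_apply, Pi.single_apply]
      refine Fin.lastCases ?_ (fun i' => ?_) i
      · rw [if_neg (Fin.castSucc_lt_last j).ne', if_pos rfl, zero_add, hstara j]
        exact Finset.sum_congr rfl fun k _ => by rw [hTlastcast]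
      · rw [if_neg (Fin.castSucc_lt_last i').ne, add_zero]
        have hstep : ∑ k : Fin n, T (Fin.castSucc i') (Fin.castSucc k) * K k j
            = ∑ k : Fin n, Tn i' k * K k j :=
          Finset.sum_congr rfl fun k _ => by rw [hTcastcast]
        rw [hstep, hTnK', Matrix.one_apply]
        by_cases hij : i' = j
        · rw [if_pos hij, if_pos (congrArg Fin.castSucc hij)]
        · rw [if_neg hij, if_neg (fun hc => hij (Fin.castSucc_inj.mp hc))]
    have h := congrArg (fun v => G.mulVec v) hTwj
    simp only [Matrix.mulVec_mulVec] at h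
    rw [hGT, Matrix.one_mulVec, Matrix.mulVec_add, Matrix.mulVec_single,
      Matrix.mulVec_single] at h
    intro i
    have h2 := congrFun h i
    simpa [mul_one] using h2
  have hF1 : ∀ (i : Fin (n + 1)) (j : Fin n),
      G i (Fin.last n) * κR * G (Fin.last n) (Fin.castSucc j)
        = G i (Fin.castSucc j)
          - (Fin.snoc (fun i' : Fin n => K i' j) 0 : Fin (n + 1) → (H →L[ℂ] H)) i := by
    intro i j
    have h := congrArg star (hGa j)
    rw [star_mul, hκRsa, hGsym, star_neg] at h
    have hsa : star (a j) = -(κR * G (Fin.last n) (Fin.castSucc j)) :=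
      neg_eq_iff_eq_neg.mp h.symm
    rw [hF1w j i, hsa]
    noncomm_ring
  have hF1last : ∀ i, G i (Fin.last n) * κR * G (Fin.last n) (Fin.last n)
      = G i (Fin.last n) := fun i => by
    rw [mul_assoc, hκRGnn, mul_one]
  -- F2 : Schur-type identity at the first corner
  set ρ : Fin n → (H →L[ℂ] H) := fun q => m (-(1 + (q : ℤ))) with hρdef
  set r : Fin n → (H →L[ℂ] H) := Matrix.vecMul ρ K with hrdef
  have hρval : ∀ q : Fin n, ρ q = m (-(1 + (q : ℤ))) := fun q => by rw [hρdef]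
  have hrval : ∀ j : Fin n, r j = ∑ k : Fin n, ρ k * K k j := fun j => by rw [hrdef]; rfl
  have hT0succ : ∀ k : Fin n, T 0 (Fin.succ k) = ρ k := fun k => by
    rw [hTval, hρval]; congr 1
    simp only [Fin.val_zero, Fin.val_succ]
    push_cast
    ring
  have hbrevTn : Matrix.vecMul (fun k : Fin n => b k.rev) Tn = ρ := by
    funext q
    show ∑ k : Fin n, b k.rev * Tn k q = ρ q
    have hswap : ∑ k : Fin n, b k.rev * Tn k q = ∑ k : Fin n, b k * Tn k.rev q :=
      Fintype.sum_bijective Fin.rev (Fin.rev_involutive.bijective) _ _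
        (fun k => by rw [Fin.rev_rev])
    rw [hswap]
    calc ∑ k : Fin n, b k * Tn k.rev q
        = ∑ k : Fin n, b k * m (((q.rev : Fin n) : ℤ) - k) := by
          refine Finset.sum_congr rfl fun k _ => ?_
          rw [hTnval]
          congr 2
          have hk := k.is_lt
          have hq := q.is_lt
          simp only [Fin.val_rev]
          omega
      _ = m (((q.rev : Fin n) : ℤ) - n) := hbTL' q.rev
      _ = ρ q := by
          rw [hρval]
          congr 1
          have hq := q.is_lt
          simp only [Fin.val_rev]
          omega
  have hbr : ∀ j : Fin n, b j.rev = r j := fun j => by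
    have h1 : (fun k : Fin n => b k.rev) = Matrix.vecMul ρ K := by
      calc (fun k : Fin n => b k.rev)
          = Matrix.vecMul (Matrix.vecMul (fun k : Fin n => b k.rev) Tn) K := by
            rw [Matrix.vecMul_vecMul, hTnK, Matrix.vecMul_one]
        _ = Matrix.vecMul ρ K := by rw [hbrevTn]
    rw [congrFun h1 j, ← hrdef]
  have hκLG0succ : ∀ j : Fin n, κL * G 0 (Fin.succ j) = -(r j) := fun j => by
    have h := congrArg star (hGb j)
    rw [star_mul, hκLsa, hGsym, star_neg, star_star] at h
    rw [h, hbr]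
  have hF2w : ∀ (j : Fin n) (i : Fin (n + 1)),
      (Fin.cons 0 (fun k : Fin n => K k j) : Fin (n + 1) → (H →L[ℂ] H)) i
        = G i (Fin.succ j) + G i 0 * r j := by
    intro j
    have hTwj : T.mulVec (Fin.cons 0 (fun k : Fin n => K k j))
        = Pi.single (Fin.succ j) 1 + Pi.single (0 : Fin (n + 1)) (r j) := by
      funext i
      have hsplit : T.mulVec (Fin.cons 0 (fun k : Fin n => K k j)) i
          = ∑ k : Fin n, T i (Fin.succ k) * K k j := by
        show ∑ k : Fin (n + 1),
            T i k * (Fin.cons 0 (fun k : Fin n => K k j) : Fin (n + 1) → (H →L[ℂ] H)) k = _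
        rw [Fin.sum_univ_succ]
        simp only [Fin.cons_zero, Fin.cons_succ, mul_zero, zero_add]
      rw [hsplit, Pi.add_apply, Pi.single_apply, Pi.single_apply]
      refine Fin.cases ?_ (fun i' => ?_) i
      · rw [if_neg (Fin.succ_ne_zero j).symm, if_pos rfl, zero_add, hrval]
        exact Finset.sum_congr rfl fun k _ => by rw [hT0succ]
      · rw [if_neg (Fin.succ_ne_zero i'), add_zero]
        have hstep : ∑ k : Fin n, T (Fin.succ i') (Fin.succ k) * K k j
            = ∑ k : Fin n, Tn i' k * K k j :=
          Finset.sum_congr rfl fun k _ => by rw [hTsuccsucc]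
        rw [hstep, hTnK', Matrix.one_apply]
        by_cases hij : i' = j
        · rw [if_pos hij, if_pos (congrArg Fin.succ hij)]
        · rw [if_neg hij, if_neg (fun hc => hij (Fin.succ_inj.mp hc))]
    have h := congrArg (fun v => G.mulVec v) hTwj
    simp only [Matrix.mulVec_mulVec] at h
    rw [hGT, Matrix.one_mulVec, Matrix.mulVec_add, Matrix.mulVec_single,
      Matrix.mulVec_single] at h
    intro i
    have h2 := congrFun h i
    simpa [mul_one] using h2
  have hF2 : ∀ (i : Fin (n + 1)) (j : Fin n),
      G i 0 * κL * G 0 (Fin.succ j)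
        = G i (Fin.succ j)
          - (Fin.cons 0 (fun k : Fin n => K k j) : Fin (n + 1) → (H →L[ℂ] H)) i := by
    intro i j
    rw [hF2w j i, mul_assoc, hκLG0succ]
    noncomm_ring
  have hF2zero : ∀ i, G i 0 * κL * G 0 0 = G i 0 := fun i => by
    rw [mul_assoc, hκLG00, mul_one]
  -- polynomial expansions
  have hΦR : phiR m n z = ∑ i : Fin (n + 1), z ^ (i : ℕ) • (G i (Fin.last n) * κR) := by
    rw [Fin.sum_univ_castSucc]
    simp only [hGa, hGnn, Fin.coe_castSucc, Fin.val_last, smul_neg]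
    simp only [phiR]
    rw [← hadef, Finset.sum_neg_distrib, neg_add_eq_sub]
  have hstarΦR : star (phiR m n z)
      = ∑ j : Fin (n + 1), w ^ (j : ℕ) • (κR * G (Fin.last n) j) := by
    rw [hΦR, star_sum]
    refine Finset.sum_congr rfl fun j _ => ?_
    rw [star_smul, star_mul, hκRsa, hGsym]
    congr 1
    rw [star_pow, Complex.star_def, ← hwdef]
  have hΨval : (∑ i : Fin (n + 1), z ^ (i : ℕ) • (G i 0 * κL))
      = (1 : H →L[ℂ] H) - ∑ k : Fin n, z ^ (n - (k : ℕ)) • star (b k) := by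
    have hL : ∑ i : Fin (n + 1), z ^ (i : ℕ) • (G i 0 * κL)
        = ∑ i : Fin (n + 1), z ^ (i : ℕ) • cstar i :=
      Finset.sum_congr rfl fun i _ => by rw [congrFun hcstarG i]
    rw [hL, Fin.sum_univ_succ, hcstar0]
    simp only [Fin.val_zero, pow_zero, one_smul]
    have hterm : ∀ j : Fin n, z ^ ((Fin.succ j : Fin (n + 1)) : ℕ) • cstar (Fin.succ j)
        = -(z ^ ((j : ℕ) + 1) • star (b j.rev)) := fun j => by
      rw [hcstarsucc, smul_neg, Fin.val_succ]
    rw [Finset.sum_congr rfl (fun j _ => hterm j), Finset.sum_neg_distrib]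
    have hswap : ∑ j : Fin n, z ^ ((j : ℕ) + 1) • star (b j.rev)
        = ∑ k : Fin n, z ^ (n - (k : ℕ)) • star (b k) :=
      Fintype.sum_bijective Fin.rev (Fin.rev_involutive.bijective) _ _
        (fun j => by
          have hj := j.is_lt
          congr 2
          rw [Fin.val_rev]
          omega)
    rw [hswap, ← sub_eq_add_neg]
  have hstarΦLval : star (phiL m n z)
      = w ^ n • (1 : H →L[ℂ] H) - ∑ k : Fin n, w ^ (k : ℕ) • star (b k) := by
    have hphiL : phiL m n z
        = z ^ n • (1 : H →L[ℂ] H) - ∑ k : Fin n, z ^ (k : ℕ) • b k := by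
      simp only [phiL]
      rfl
    rw [hphiL, star_sub, star_smul, star_one, star_sum]
    congr 1
    · congr 1
      rw [star_pow, Complex.star_def, ← hwdef]
    · refine Finset.sum_congr rfl fun k _ => ?_
      rw [star_smul]
      congr 1
      rw [star_pow, Complex.star_def, ← hwdef]
  have hkey : z ^ n • star (phiL m n z)
      = ∑ i : Fin (n + 1), z ^ (i : ℕ) • (G i 0 * κL) := by
    rw [hstarΦLval, hΨval, smul_sub]
    congr 1
    · rw [smul_smul, hzw n, one_smul]
    · rw [Finset.smul_sum]
      refine Finset.sum_congr rfl fun k _ => ?_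
      rw [smul_smul]
      congr 1
      have hk : (k : ℕ) ≤ n := le_of_lt k.is_lt
      calc z ^ n * w ^ (k : ℕ) = z ^ (n - (k : ℕ)) * (z ^ (k : ℕ) * w ^ (k : ℕ)) := by
            rw [← mul_assoc, ← pow_add]
            congr 2
            omega
        _ = z ^ (n - (k : ℕ)) := by rw [hzw, mul_one]
  have hΦLstar : star (phiL m n z)
      = w ^ n • ∑ i : Fin (n + 1), z ^ (i : ℕ) • (G i 0 * κL) := by
    rw [← hkey, smul_smul, hwz, one_smul]
  have hΦL : phiL m n z
      = z ^ n • ∑ i : Fin (n + 1), w ^ (i : ℕ) • (κL * G 0 i) := by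
    have h := congrArg star hΦLstar
    rw [star_star] at h
    rw [h, star_smul, star_sum]
    congr 1
    · rw [star_pow, Complex.star_def, hwdef, Complex.conj_conj]
    · refine Finset.sum_congr rfl fun i _ => ?_
      rw [star_smul, star_mul, hκLsa, hGsym]
      congr 1
      rw [star_pow, Complex.star_def, ← hwdef]
  -- expansion of the products
  have hexpand : ∀ (A B : Fin (n + 1) → (H →L[ℂ] H)) (κi : H →L[ℂ] H),
      (∑ i : Fin (n + 1), z ^ (i : ℕ) • A i) * κi * (∑ j : Fin (n + 1), w ^ (j : ℕ) • B j)
        = ∑ i : Fin (n + 1), ∑ j : Fin (n + 1),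
            (z ^ (i : ℕ) * w ^ (j : ℕ)) • (A i * κi * B j) := by
    intro A B κi
    rw [Finset.sum_mul, Finset.sum_mul]
    refine Finset.sum_congr rfl fun i _ => ?_
    rw [Finset.mul_sum]
    refine Finset.sum_congr rfl fun j _ => ?_
    rw [smul_mul_assoc, smul_mul_assoc, mul_smul_comm, smul_smul]
  simp only [← ContinuousLinearMap.star_eq_adjoint]
  have hLHS : (phiR m n z * sRi) * star (phiR m n z * sRi)
      = ∑ i : Fin (n + 1), ∑ j : Fin (n + 1),
          (z ^ (i : ℕ) * w ^ (j : ℕ)) • (G i (Fin.last n) * κR * G (Fin.last n) j) := by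
    rw [star_mul, hstarsRi]
    rw [show (phiR m n z * sRi) * (sRi * star (phiR m n z))
        = phiR m n z * κRi * star (phiR m n z) by rw [hκRidef]; noncomm_ring]
    rw [hstarΦR, hΦR, hexpand]
    refine Finset.sum_congr rfl fun i _ => Finset.sum_congr rfl fun j _ => ?_
    congr 1
    calc G i (Fin.last n) * κR * κRi * (κR * G (Fin.last n) j)
        = G i (Fin.last n) * (κR * κRi * κR) * G (Fin.last n) j := by noncomm_ring
      _ = G i (Fin.last n) * κR * G (Fin.last n) j := by rw [hκRκRiκR]
  have hRHS : star (sLi * phiL m n z) * (sLi * phiL m n z)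
      = ∑ i : Fin (n + 1), ∑ j : Fin (n + 1),
          (z ^ (i : ℕ) * w ^ (j : ℕ)) • (G i 0 * κL * G 0 j) := by
    rw [star_mul, hstarsLi]
    rw [show (star (phiL m n z) * sLi) * (sLi * phiL m n z)
        = star (phiL m n z) * κLi * phiL m n z by rw [hκLidef]; noncomm_ring]
    rw [hΦLstar, hΦL]
    rw [smul_mul_assoc, smul_mul_assoc, mul_smul_comm, smul_smul, hwz, one_smul]
    rw [hexpand]
    refine Finset.sum_congr rfl fun i _ => Finset.sum_congr rfl fun j _ => ?_
    congr 1
    calc G i 0 * κL * κLi * (κL * G 0 j)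
        = G i 0 * (κL * κLi * κL) * G 0 j := by noncomm_ring
      _ = G i 0 * κL * G 0 j := by rw [hκLκLiκL]
  rw [hLHS, hRHS]
  -- the core Christoffel--Darboux computation
  have hSP : ∀ i : Fin (n + 1),
      ∑ j : Fin (n + 1), (z ^ (i : ℕ) * w ^ (j : ℕ)) • (G i (Fin.last n) * κR * G (Fin.last n) j)
        = (∑ j : Fin (n + 1), (z ^ (i : ℕ) * w ^ (j : ℕ)) • G i j)
          - ∑ j : Fin n, (z ^ (i : ℕ) * w ^ (j : ℕ)) •
              (Fin.snoc (fun i' : Fin n => K i' j) 0 : Fin (n + 1) → (H →L[ℂ] H)) i := by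
    intro i
    rw [Fin.sum_univ_castSucc, Fin.sum_univ_castSucc]
    simp only [Fin.coe_castSucc, Fin.val_last]
    rw [hF1last i]
    have hterm : ∀ j : Fin n,
        (z ^ (i : ℕ) * w ^ (j : ℕ)) • (G i (Fin.last n) * κR * G (Fin.last n) (Fin.castSucc j))
          = (z ^ (i : ℕ) * w ^ (j : ℕ)) • G i (Fin.castSucc j)
            - (z ^ (i : ℕ) * w ^ (j : ℕ)) •
              (Fin.snoc (fun i' : Fin n => K i' j) 0 : Fin (n + 1) → (H →L[ℂ] H)) i :=
      fun j => by rw [hF1 i j, smul_sub]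
    rw [Finset.sum_congr rfl (fun j _ => hterm j), Finset.sum_sub_distrib]
    abel
  have hSQ : ∀ i : Fin (n + 1),
      ∑ j : Fin (n + 1), (z ^ (i : ℕ) * w ^ (j : ℕ)) • (G i 0 * κL * G 0 j)
        = (∑ j : Fin (n + 1), (z ^ (i : ℕ) * w ^ (j : ℕ)) • G i j)
          - ∑ j : Fin n, (z ^ (i : ℕ) * w ^ ((j : ℕ) + 1)) •
              (Fin.cons 0 (fun k : Fin n => K k j) : Fin (n + 1) → (H →L[ℂ] H)) i := by
    intro i
    rw [Fin.sum_univ_succ, Fin.sum_univ_succ]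
    simp only [Fin.val_succ, Fin.val_zero, pow_zero, mul_one]
    rw [hF2zero i]
    have hterm : ∀ j : Fin n,
        (z ^ (i : ℕ) * w ^ ((j : ℕ) + 1)) • (G i 0 * κL * G 0 (Fin.succ j))
          = (z ^ (i : ℕ) * w ^ ((j : ℕ) + 1)) • G i (Fin.succ j)
            - (z ^ (i : ℕ) * w ^ ((j : ℕ) + 1)) •
              (Fin.cons 0 (fun k : Fin n => K k j) : Fin (n + 1) → (H →L[ℂ] H)) i :=
      fun j => by rw [hF2 i j, smul_sub]
    rw [Finset.sum_congr rfl (fun j _ => hterm j), Finset.sum_sub_distrib]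
    abel
  rw [Finset.sum_congr rfl (fun i _ => hSP i), Finset.sum_congr rfl (fun i _ => hSQ i)]
  rw [Finset.sum_sub_distrib, Finset.sum_sub_distrib]
  congr 1
  conv_lhs => rw [Finset.sum_comm]
  conv_rhs => rw [Finset.sum_comm]
  refine Finset.sum_congr rfl fun j _ => ?_
  rw [Fin.sum_univ_castSucc, Fin.sum_univ_succ]
  simp only [Fin.snoc_castSucc, Fin.snoc_last, Fin.cons_zero, Fin.cons_succ, smul_zero,
    add_zero, zero_add, Fin.coe_castSucc, Fin.val_succ]
  refine Finset.sum_congr rfl fun i' _ => ?_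
  congr 1
  rw [show z ^ ((i' : ℕ) + 1) * w ^ ((j : ℕ) + 1)
      = (z ^ (i' : ℕ) * w ^ (j : ℕ)) * (z * w) by ring, hz1, mul_one]
end
end
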